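/- arXiv:1301.0505 — 7 statements merged into one kernel-verified Lean document; each statement's English description precedes it below -/
import Mathlib

section
/- A left regulated function H : I → ℝ is locally Riemann integrable (Riemann integrable on each compact subinterval of I) if and only if H is locally bounded. -/
/-!
A Riemann integrable function is bounded: on a fine enough tagged partition, moving the tag of one
box `J` to any point `x ∈ J` keeps the partition fine, so by the Henstock–Sacks estimate the two
Riemann sums, which differ by `vol J • (f x - f (tag J))`, are `2`-close; thus `f` is bounded on `J`
by `‖f (tag J)‖ + 2 / vol J`.

Conversely, a bounded function is Riemann integrable once its discontinuities are null (Lebesgue's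
criterion), and for a left regulated function they are countable. Indeed, at each point `t` where
the oscillation of `f` is at least `ε`, the function is `ε / 2`-close to its left limit on some
interval `(u, t)`, which therefore contains no such point; these intervals are pairwise disjoint.
-/

open Set Filter Topology MeasureTheory

section LeftLimits

variable {α β : Type*} [LinearOrder α] [TopologicalSpace α] [OrderTopology α] [DenselyOrdered α]
  [TopologicalSpace.SeparableSpace α]

theorem countable_of_forall_exists_lt_disjoint_Ioo {s : Set α}
    (h : ∀ t ∈ s, ∃ u < t, Disjoint (Ioo u t) s) : s.Countable := by
  choose! u hu hdisj using h
  have hdisj_of_lt : ∀ t ∈ s, ∀ t' ∈ s, t < t' → Disjoint (Ioo (u t) t) (Ioo (u t') t') := by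
    intro t ht t' ht' htt'
    have hle : t ≤ u t' := not_lt.1 fun hlt => disjoint_left.1 (hdisj t' ht') ⟨hlt, htt'⟩ ht
    exact disjoint_left.2 fun x hx hx' => (hx.2.trans_le hle).not_gt hx'.1
  refine Set.PairwiseDisjoint.countable_of_isOpen (s := fun t => Ioo (u t) t)
    (fun t ht t' ht' hne => ?_) (fun _ _ => isOpen_Ioo) fun t ht => nonempty_Ioo.2 (hu t ht)
  rcases hne.lt_or_gt with hlt | hgt
  exacts [hdisj_of_lt t ht t' ht' hlt, (hdisj_of_lt t' ht' t ht hgt).symm]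

variable [NoMinOrder α] [PseudoMetricSpace β]

theorem countable_not_continuousAt_of_forall_tendsto_nhdsLT {f : α → β} {s : Set α}
    (h : ∀ t ∈ s, ∃ L, Tendsto f (𝓝[<] t) (𝓝 L)) :
    {t ∈ s | ¬ContinuousAt f t}.Countable := by
  let S : ℝ → Set α := fun ε =>
    {t ∈ s | ∀ U ∈ 𝓝 t, ∃ x ∈ U, ∃ y ∈ U, ε ≤ dist (f x) (f y)}
  have hS : ∀ ε > 0, (S ε).Countable := by
    intro ε hε
    refine countable_of_forall_exists_lt_disjoint_Ioo fun t ⟨hts, _⟩ => ?_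
    obtain ⟨L, hL⟩ := h t hts
    obtain ⟨u, hut, hu⟩ := mem_nhdsLT_iff_exists_Ioo_subset.1
      (hL (Metric.ball_mem_nhds L (half_pos hε)))
    refine ⟨u, hut, disjoint_left.2 fun t' ht' ⟨_, hosc⟩ => ?_⟩
    obtain ⟨x, hx, y, hy, hxy⟩ := hosc _ (isOpen_Ioo.mem_nhds ht')
    have hx' : dist (f x) L < ε / 2 := hu hx
    have hy' : dist (f y) L < ε / 2 := hu hy
    linarith [dist_triangle_right (f x) (f y) L]
  have hsub : {t ∈ s | ¬ContinuousAt f t} ⊆ ⋃ n : ℕ, S (1 / (n + 1)) := by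
    rintro t ⟨hts, hdisc⟩
    obtain ⟨ε, hε, hfreq⟩ : ∃ ε > 0, ∃ᶠ x in 𝓝 t, ε ≤ dist (f x) (f t) := by
      simpa [Metric.continuousAt_iff', not_eventually] using hdisc
    obtain ⟨n, hn⟩ := exists_nat_one_div_lt hε
    refine mem_iUnion.2 ⟨n, hts, fun U hU => ?_⟩
    obtain ⟨x, hx, hεx⟩ := (frequently_iff.1 hfreq) hU
    exact ⟨x, hx, t, mem_of_mem_nhds hU, hn.le.trans hεx⟩
  exact (countable_iUnion fun n => hS _ Nat.one_div_pos_of_nat).mono hsub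

end LeftLimits

namespace BoxIntegral

variable {ι : Type*}

theorem Box.closure_coe [Finite ι] (I : Box ι) : closure (I : Set (ι → ℝ)) = Box.Icc I := by
  rw [Box.coe_eq_pi, closure_pi_set, Box.Icc_eq_pi]
  exact pi_congr rfl fun i _ => closure_Ioc (I.lower_lt_upper i).ne

theorem Prepartition.IsPartition.biUnion_Icc_eq [Finite ι] {I : Box ι} {π : Prepartition I}
    (hπ : π.IsPartition) : ⋃ J ∈ π, Box.Icc J = Box.Icc I := by
  calc ⋃ J ∈ π, Box.Icc J = ⋃ J ∈ π.boxes, closure (J : Set (ι → ℝ)) := by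
        simp only [Box.closure_coe]; rfl
    _ = closure π.iUnion := (Finset.closure_biUnion _ _).symm
    _ = Box.Icc I := by rw [hπ.iUnion_eq, Box.closure_coe]

namespace TaggedPrepartition

variable {I J : Box ι}

def updateTag [DecidableEq (Box ι)] (π : TaggedPrepartition I) (hJ : J ∈ π) (x : ι → ℝ)
    (hx : x ∈ Box.Icc J) : TaggedPrepartition I where
  toPrepartition := π.toPrepartition
  tag := Function.update π.tag J x
  tag_mem_Icc K := by
    rcases eq_or_ne K J with rfl | hK
    · simpa using Box.le_iff_Icc.1 (π.le_of_mem hJ) hx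
    · simpa [hK] using π.tag_mem_Icc K

variable [DecidableEq (Box ι)] {π : TaggedPrepartition I} (hJ : J ∈ π) {x : ι → ℝ}
  (hx : x ∈ Box.Icc J)

theorem IsHenstock.updateTag (hπ : π.IsHenstock) : (π.updateTag hJ x hx).IsHenstock := by
  intro K hK
  rcases eq_or_ne K J with rfl | hKJ
  · simpa [TaggedPrepartition.updateTag] using hx
  · simpa [TaggedPrepartition.updateTag, hKJ] using hπ K hK

theorem integralSum_updateTag_sub {E F : Type*} [NormedAddCommGroup E] [NormedSpace ℝ E]
    [NormedAddCommGroup F] [NormedSpace ℝ F] (f : (ι → ℝ) → E) (vol : ι →ᵇᵃ E →L[ℝ] F) :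
    integralSum f vol (π.updateTag hJ x hx) - integralSum f vol π =
      vol J (f x) - vol J (f (π.tag J)) := by
  rw [integralSum, integralSum, show (π.updateTag hJ x hx).boxes = π.boxes from rfl,
    ← Finset.sum_sub_distrib, Finset.sum_eq_single_of_mem J hJ]
  · simp [TaggedPrepartition.updateTag]
  · intro K _ hKJ
    simp [TaggedPrepartition.updateTag, hKJ]

end TaggedPrepartition

theorem TaggedPrepartition.IsHenstock.isSubordinate_of_diam_le [Fintype ι] {I : Box ι}
    {π : TaggedPrepartition I} (hπ : π.IsHenstock) {r : (ι → ℝ) → Ioi (0 : ℝ)}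
    (hr : ∀ J ∈ π, Metric.diam (Box.Icc J) ≤ r (π.tag J)) : π.IsSubordinate r :=
  fun J hJ _ hy => Metric.mem_closedBall.2 <|
    (Metric.dist_le_diam_of_mem J.isBounded_Icc hy (hπ J hJ)).trans (hr J hJ)

theorem IntegrationParams.memBaseSet_riemann_iff [Fintype ι] {I : Box ι} {c : NNReal}
    {r : (ι → ℝ) → Ioi (0 : ℝ)} {π : TaggedPrepartition I} :
    Riemann.MemBaseSet I c r π ↔ π.IsSubordinate r ∧ π.IsHenstock :=
  ⟨fun h => ⟨h.isSubordinate, h.isHenstock rfl⟩, fun h =>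
    ⟨h.1, fun _ => h.2, fun h => absurd h Bool.false_ne_true, fun h => absurd h Bool.false_ne_true⟩⟩

theorem Integrable.exists_bound_of_riemann [Fintype ι] {E : Type*} [NormedAddCommGroup E]
    [NormedSpace ℝ E] {I : Box ι} {f : (ι → ℝ) → E}
    (h : Integrable I IntegrationParams.Riemann f BoxAdditiveMap.volume) :
    ∃ C, ∀ x ∈ Box.Icc I, ‖f x‖ ≤ C := by
  classical
  set r := h.convergenceR 1 0
  have hr : r = fun _ => r 0 := funext (h.convergenceR_cond 1 0 rfl)
  obtain ⟨π, hπ, hHen, hsub, -, -⟩ := I.exists_taggedPartition_isHenstock_isSubordinate_homothetic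
    fun _ => ⟨(r 0 : ℝ) / 2, half_pos (r 0).2.out⟩
  have hdiam : ∀ J ∈ π, Metric.diam (Box.Icc J) ≤ r 0 := fun J hJ =>
    (hsub.diam_le hJ).trans_eq (mul_div_cancel₀ _ two_ne_zero)
  have hbase : ∀ π' : TaggedPrepartition I, π'.IsHenstock →
      (∀ J ∈ π', Metric.diam (Box.Icc J) ≤ r 0) → IntegrationParams.Riemann.MemBaseSet I 0 r π' :=
    fun π' hHen' hdiam' => IntegrationParams.memBaseSet_riemann_iff.2
      ⟨hHen'.isSubordinate_of_diam_le fun J hJ => by rw [hr]; exact hdiam' J hJ, hHen'⟩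
  have hvol : ∀ J : Box ι, 0 < ∏ i, (J.upper i - J.lower i) := fun J =>
    Finset.prod_pos fun i _ => sub_pos.2 (J.lower_lt_upper i)
  let B : Box ι → ℝ := fun J => ‖f (π.tag J)‖ + 2 / ∏ i, (J.upper i - J.lower i)
  have hbound : ∀ J ∈ π, ∀ x ∈ Box.Icc J, ‖f x‖ ≤ B J := by
    intro J hJ x hx
    have hdist := h.dist_integralSum_le_of_memBaseSet one_pos one_pos
      (hbase _ (hHen.updateTag hJ hx) hdiam) (hbase π hHen hdiam) rfl
    rw [dist_eq_norm, TaggedPrepartition.integralSum_updateTag_sub, BoxAdditiveMap.volume_apply,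
      BoxAdditiveMap.volume_apply, ← smul_sub, norm_smul, Real.norm_of_nonneg (hvol J).le] at hdist
    calc ‖f x‖ ≤ ‖f (π.tag J)‖ + ‖f x - f (π.tag J)‖ := norm_le_norm_add_norm_sub' _ _
      _ ≤ ‖f (π.tag J)‖ + 2 / ∏ i, (J.upper i - J.lower i) := by
        gcongr
        rw [le_div_iff₀' (hvol J)]
        linarith
  refine ⟨∑ J ∈ π.boxes, B J, fun x hx => ?_⟩
  obtain ⟨J, hJ, hxJ⟩ := mem_iUnion₂.1 (hπ.biUnion_Icc_eq.symm ▸ hx)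
  have hB : ∀ K ∈ π.boxes, 0 ≤ B K := fun K _ =>
    add_nonneg (norm_nonneg _) (div_nonneg zero_le_two (hvol K).le)
  exact (hbound J hJ x hxJ).trans (Finset.single_le_sum hB hJ)

theorem integrable_of_bounded_of_countable_not_continuousAt {E : Type*} [NormedAddCommGroup E]
    [NormedSpace ℝ E] [CompleteSpace E] {a b : ℝ} (h : a < b) (l : IntegrationParams)
    {g : ℝ → E} (hb : ∃ M, ∀ t ∈ Icc a b, ‖g t‖ ≤ M)
    (hc : {t ∈ Ioo a b | ¬ContinuousAt g t}.Countable) :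
    Integrable (Box.mk (fun _ : Fin 1 => a) (fun _ => b) fun _ => h) l (fun x => g (x 0))
      BoxAdditiveMap.volume := by
  have hb' : ∃ C : ℝ, ∀ x ∈ Box.Icc (Box.mk (fun _ : Fin 1 => a) (fun _ => b) fun _ => h),
      ‖g (x 0)‖ ≤ C :=
    let ⟨M, hM⟩ := hb
    ⟨M, fun x hx => hM _ ⟨hx.1 0, hx.2 0⟩⟩
  refine integrable_of_bounded_and_ae_continuousWithinAt l hb' volume (ae_restrict_of_ae ?_)
  have hN : ((fun x : Fin 1 → ℝ => x 0) ⁻¹'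
      insert a (insert b {t ∈ Ioo a b | ¬ContinuousAt g t})).Countable :=
    ((hc.insert b).insert a).preimage (Equiv.funUnique (Fin 1) ℝ).injective
  filter_upwards [hN.ae_notMem volume] with x hx
  simp only [mem_preimage, mem_insert_iff, mem_ofPred_eq, not_or, not_and, not_not] at hx
  obtain ⟨hxa, hxb, hcont⟩ := hx
  by_cases hx0 : x 0 ∈ Ioo a b
  · exact ((hcont hx0).comp (f := fun y : Fin 1 → ℝ => y 0)
      (continuous_apply 0).continuousAt).continuousWithinAt
  · refine continuousWithinAt_of_notMem_closure ?_
    rw [(Box.isCompact_Icc _).isClosed.closure_eq]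
    exact fun hxI => hx0 ⟨(hxI.1 0).lt_of_ne' hxa, (hxI.2 0).lt_of_ne hxb⟩

end BoxIntegral

/-- A left regulated function `H : I → ℝ` is locally Riemann integrable (Riemann
integrable, in the sense of the Riemann integration parameters of the box integral,
on each compact subinterval of `I`) if and only if it is locally bounded (bounded on
each compact subinterval of `I`). -/
theorem leftRegulated_locallyRiemannIntegrable_iff_locallyBounded
    (I : Set ℝ) (hI : I.OrdConnected) (H : ℝ → ℝ)
    (hreg : ∀ t ∈ I, (∃ s ∈ I, s < t) →
      ∃ L : ℝ, Tendsto H (𝓝[I ∩ Iio t] t) (𝓝 L)) :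
    (∀ a b : ℝ, a ∈ I → b ∈ I → ∀ h : a < b,
      BoxIntegral.Integrable
        (BoxIntegral.Box.mk (fun _ : Fin 1 => a) (fun _ => b) (fun _ => h))
        BoxIntegral.IntegrationParams.Riemann (fun x => H (x 0))
        ((volume : Measure (Fin 1 → ℝ)).toBoxAdditive.toSMul))
    ↔ (∀ a b : ℝ, a ∈ I → b ∈ I → ∃ M : ℝ, ∀ t ∈ Icc a b, |H t| ≤ M) := by
  refine ⟨fun hint a b ha hb => ?_, fun hbdd a b ha hb hab => ?_⟩
  · rcases lt_or_ge a b with hab | hba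
    · obtain ⟨M, hM⟩ := (hint a b ha hb hab).exists_bound_of_riemann
      exact ⟨M, fun t ht => hM (fun _ => t) ⟨fun _ => ht.1, fun _ => ht.2⟩⟩
    · exact ⟨|H a|, fun t ht => by rw [le_antisymm (ht.2.trans hba) ht.1]⟩
  refine BoxIntegral.integrable_of_bounded_of_countable_not_continuousAt hab _ (hbdd a b ha hb)
    (countable_not_continuousAt_of_forall_tendsto_nhdsLT fun t ht => ?_)
  have htI : t ∈ I := hI.out ha hb (Ioo_subset_Icc_self ht)
  obtain ⟨L, hL⟩ := hreg t htI ⟨a, ha, ht.1⟩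
  have hIt : I ∈ 𝓝[<] t := mem_of_superset (Ioo_mem_nhdsLT ht.1)
    (Ioo_subset_Icc_self.trans (hI.out ha htI))
  exact ⟨L, by rwa [nhdsWithin_inter_of_mem hIt] at hL⟩
end

section
/- Let R₀([a,b]) = {F ∈ R_lc([a,b]) : F(a) = 0}. Define u_n(x) = n(x−a) for a ≤ x ≤ a + 1/n and u_n(x) = 1 for a + 1/n ≤ x ≤ b. Then for every F ∈ R₀([a,b]), ‖F − u_n F‖_∞ → 0 as n → ∞; i.e., (u_n) is an approximate identity for R₀([a,b]). Moreover, R₀([a,b]) has no multiplicative unit. -/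
open Set Filter Topology

/-- Membership in `R_lc([a,b])`: bounded on `[a,b]`, left continuous on `(a,b]`,
right continuous at `a`. -/
def MemRlc (a b : ℝ) (F : ℝ → ℝ) : Prop :=
  (∃ M : ℝ, ∀ x ∈ Icc a b, |F x| ≤ M) ∧
  (∀ c ∈ Ioc a b, Tendsto F (𝓝[Ioo a c] c) (𝓝 (F c))) ∧
  Tendsto F (𝓝[Ioo a b] a) (𝓝 (F a))

/-- The functions `u_n(x) = n(x-a)` on `[a, a+1/n]`, `u_n(x) = 1` on `[a+1/n, b]`,
form an approximate identity for `R₀([a,b]) = {F ∈ R_lc([a,b]) : F(a) = 0}`: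
`‖F - u_n F‖_∞ → 0` for every `F ∈ R₀([a,b])`.  Moreover `R₀([a,b])` has no
multiplicative unit. -/
theorem R0_approximate_identity_and_no_unit
    (a b : ℝ) (hab : a < b) (u : ℕ → ℝ → ℝ)
    (hu1 : ∀ n : ℕ, 1 ≤ n → ∀ x : ℝ, a ≤ x → x ≤ a + 1 / n → u n x = n * (x - a))
    (hu2 : ∀ n : ℕ, 1 ≤ n → ∀ x : ℝ, a + 1 / n ≤ x → x ≤ b → u n x = 1) :
    (∀ F : ℝ → ℝ, MemRlc a b F → F a = 0 →
      Tendsto (fun n : ℕ => ⨆ x : Icc a b, |F (x : ℝ) - u n (x : ℝ) * F (x : ℝ)|)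
        atTop (𝓝 0)) ∧
    ¬ ∃ e : ℝ → ℝ, MemRlc a b e ∧ e a = 0 ∧
        ∀ F : ℝ → ℝ, MemRlc a b F → F a = 0 → ∀ x ∈ Icc a b, e x * F x = F x := by
  have hne : (Icc a b).Nonempty := nonempty_Icc.2 hab.le
  haveI : Nonempty (Icc a b) := hne.to_subtype
  constructor
  · intro F hF hFa
    rw [Metric.tendsto_atTop]
    intro ε hε
    obtain ⟨δ, hδ, hδ'⟩ := Metric.tendsto_nhdsWithin_nhds.mp hF.2.2 (ε / 2) (by positivity)
    set d := min δ (b - a) with hd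
    have hdpos : 0 < d := lt_min hδ (by linarith)
    obtain ⟨N, hN⟩ := exists_nat_gt (1 / d)
    have hNpos : (0 : ℝ) < N := lt_trans (by positivity) hN
    refine ⟨max N 1, fun n hn => ?_⟩
    have hn1 : 1 ≤ n := le_trans (le_max_right _ _) hn
    have hnN : (N : ℝ) ≤ n := Nat.cast_le.2 (le_trans (le_max_left _ _) hn)
    have hnpos : (0 : ℝ) < n := by exact_mod_cast hn1
    have h1N : 1 / (N : ℝ) < d := by
      rw [div_lt_iff₀ hNpos]
      have h1 : 1 < (N : ℝ) * d := by
        have := (div_lt_iff₀ hdpos).mp hN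
        linarith
      linarith [h1]
    have h1n : 1 / (n : ℝ) < d :=
      lt_of_le_of_lt (one_div_le_one_div_of_le hNpos hnN) h1N
    have key : ∀ x ∈ Icc a b, |F x - u n x * F x| ≤ ε / 2 := by
      intro x hx
      by_cases hxa : x = a
      · simp [hxa, hFa]; positivity
      have hax : a < x := lt_of_le_of_ne hx.1 (Ne.symm hxa)
      by_cases hle : x ≤ a + 1 / n
      · have hux : u n x = n * (x - a) := hu1 n hn1 x hx.1 hle
        have h0 : 0 ≤ (n : ℝ) * (x - a) := by
          apply mul_nonneg hnpos.le; linarith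
        have h1 : (n : ℝ) * (x - a) ≤ 1 := by
          have hxa1 : x - a ≤ 1 / n := by linarith
          calc (n : ℝ) * (x - a) ≤ (n : ℝ) * (1 / n) := by
                exact mul_le_mul_of_nonneg_left hxa1 hnpos.le
            _ = 1 := by field_simp
        have hxb : x < b := by
          have : (1 : ℝ) / n < b - a := lt_of_lt_of_le h1n (min_le_right _ _)
          linarith
        have hFsmall : |F x| < ε / 2 := by
          have hdist : dist x a < δ := by
            rw [Real.dist_eq, abs_of_nonneg (by linarith : (0:ℝ) ≤ x - a)]
            exact lt_of_le_of_lt (by linarith) (lt_of_lt_of_le h1n (min_le_left _ _))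
          have := hδ' (Set.mem_Ioo.mpr ⟨hax, hxb⟩) hdist
          rwa [hFa, Real.dist_eq, sub_zero] at this
        calc |F x - u n x * F x| = |1 - u n x| * |F x| := by
              rw [← abs_mul]; ring_nf
          _ ≤ 1 * |F x| := by
              apply mul_le_mul_of_nonneg_right _ (abs_nonneg _)
              rw [hux, abs_of_nonneg (by linarith)]; linarith
          _ ≤ ε / 2 := by rw [one_mul]; linarith
      · have hux : u n x = 1 := hu2 n hn1 x (by linarith [not_le.mp hle]) hx.2
        simp [hux]; positivity
    have hsup_le : (⨆ x : Icc a b, |F (x : ℝ) - u n (x : ℝ) * F (x : ℝ)|) ≤ ε / 2 :=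
      ciSup_le fun x => key x x.2
    have hbdd : BddAbove (Set.range fun x : Icc a b =>
        |F (x : ℝ) - u n (x : ℝ) * F (x : ℝ)|) :=
      ⟨ε / 2, by rintro _ ⟨x, rfl⟩; exact key x x.2⟩
    have hsup_nonneg : 0 ≤ ⨆ x : Icc a b, |F (x : ℝ) - u n (x : ℝ) * F (x : ℝ)| := by
      obtain ⟨x⟩ := (inferInstance : Nonempty (Icc a b))
      exact le_trans (abs_nonneg _) (le_ciSup hbdd x)
    rw [Real.dist_eq, sub_zero, abs_of_nonneg hsup_nonneg]
    exact lt_of_le_of_lt hsup_le (by linarith)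
  · rintro ⟨e, he, hea, hunit⟩
    have hFmem : MemRlc a b (fun x => x - a) := by
      refine ⟨⟨b - a, fun x hx => ?_⟩, fun c _ => ?_, ?_⟩
      · show |x - a| ≤ b - a
        rw [abs_of_nonneg (by linarith [hx.1] : (0:ℝ) ≤ x - a)]; linarith [hx.2]
      · exact ((continuous_id.sub continuous_const).tendsto c).mono_left nhdsWithin_le_nhds
      · exact ((continuous_id.sub continuous_const).tendsto a).mono_left nhdsWithin_le_nhds
    have he1 : ∀ x ∈ Ioo a b, e x = 1 := by
      intro x hx
      have h := hunit (fun x => x - a) hFmem (by simp) x ⟨hx.1.le, hx.2.le⟩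
      have hxa : x - a ≠ 0 := by have := hx.1; intro hc; rw [sub_eq_zero] at hc; linarith
      have h' : e x * (x - a) = 1 * (x - a) := by rw [one_mul]; exact h
      exact mul_right_cancel₀ hxa h'
    haveI : (𝓝[Ioo a b] a).NeBot := by
      apply mem_closure_iff_nhdsWithin_neBot.mp
      rw [closure_Ioo hab.ne]
      exact ⟨le_refl a, hab.le⟩
    have h1 : Tendsto e (𝓝[Ioo a b] a) (𝓝 1) := by
      apply Tendsto.congr' _ tendsto_const_nhds
      filter_upwards [self_mem_nhdsWithin] with x hx
      exact (he1 x hx).symm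
    have h0 : Tendsto e (𝓝[Ioo a b] a) (𝓝 0) := hea ▸ he.2.2
    have : (1 : ℝ) = 0 := tendsto_nhds_unique h1 h0
    norm_num at this
end

section
/- The function F = Σ_{m=2}^∞ (−1)^m χ_{(−1/m, −1/(m+1)]} on [−1,0] is Lebesgue integrable, is the limit in the Alexiewicz norm (and in L¹ norm) of its partial sums F_n = Σ_{m=2}^n (−1)^m χ_{(−1/m,−1/(m+1)]}, each of which is left continuous, but F does not have a left limit at 0; hence the space of left continuous integrable functions is not complete under the Alexiewicz norm nor under the L¹ norm. In particular ‖F − F_n‖_{L¹} = 1/(n+1). -/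
/-!
The blocks `(-1/(k+2), -1/(k+3)]` tile `(-1/2, 0)`, so `F` is `±1` on `(-1/2, 0)`, with the
sign of the block, and `F - F_n` is the same sign function cut down to the tail
`(-1/(n+1), 0)`. Hence `|F - F_n|` is the indicator of that interval, which gives both the
`L¹` distance `1/(n+1)` and the uniform bound on `|∫_c^d (F - F_n)|`. Each `F_n` is a finite
combination of indicators of left-open, right-closed intervals, hence left continuous, while
`F(-1/(k+3)) = (-1)^k` oscillates as `-1/(k+3) → 0⁻`.
-/

open Set Filter Topology MeasureTheory intervalIntegral

/-- `F = Σ_{m=2}^∞ (-1)^m χ_{(-1/m, -1/(m+1)]}` (indexed here by `m = k+2`). -/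
noncomputable def Fser : ℝ → ℝ := fun x =>
  ∑' k : ℕ, (-1 : ℝ) ^ (k + 2) *
    Set.indicator (Set.Ioc (-(1 : ℝ) / (k + 2)) (-(1 : ℝ) / (k + 3))) 1 x

/-- The partial sum `F_n = Σ_{m=2}^n (-1)^m χ_{(-1/m, -1/(m+1)]}`. -/
noncomputable def Fpart (n : ℕ) : ℝ → ℝ := fun x =>
  ∑ k ∈ Finset.range (n - 1), (-1 : ℝ) ^ (k + 2) *
    Set.indicator (Set.Ioc (-(1 : ℝ) / (k + 2)) (-(1 : ℝ) / (k + 3))) 1 x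

theorem eventually_mem_Ioc_iff_nhdsLT {α : Type*} [TopologicalSpace α] [LinearOrder α]
    [ClosedIicTopology α] (a b c : α) : ∀ᶠ x in 𝓝[<] c, (x ∈ Ioc a b ↔ c ∈ Ioc a b) := by
  have hlow : ∀ᶠ x in 𝓝[<] c, (a < x ↔ a < c) := by
    rcases lt_or_ge a c with hac | hca
    · filter_upwards [Ioo_mem_nhdsLT hac] with x hx
      exact iff_of_true hx.1 hac
    · filter_upwards [self_mem_nhdsWithin] with x (hx : x < c)
      exact iff_of_false (by order) (by order)
  have hup : ∀ᶠ x in 𝓝[<] c, (x ≤ b ↔ c ≤ b) := by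
    rcases lt_or_ge b c with hbc | hcb
    · filter_upwards [Ioo_mem_nhdsLT hbc] with x hx
      exact iff_of_false (not_le.2 hx.1) (not_le.2 hbc)
    · filter_upwards [self_mem_nhdsWithin] with x (hx : x < c)
      exact iff_of_true (by order) hcb
  filter_upwards [hlow, hup] with x h₁ h₂
  simp only [mem_Ioc, h₁, h₂]

theorem tendsto_indicator_Ioc_nhdsLT {α M : Type*} [TopologicalSpace α] [LinearOrder α]
    [ClosedIicTopology α] [Zero M] [TopologicalSpace M] (a b c : α) (m : M) :
    Tendsto ((Ioc a b).indicator fun _ => m) (𝓝[<] c)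
      (𝓝 ((Ioc a b).indicator (fun _ => m) c)) := by
  refine tendsto_const_nhds.congr' ?_
  filter_upwards [eventually_mem_Ioc_iff_nhdsLT a b c] with x hx
  by_cases hc : c ∈ Ioc a b <;> simp [Set.indicator, hc, hx]

theorem symmDiff_Ioo_Ioc {α : Type*} [LinearOrder α] {a b c : α} (hab : a ≤ b) (hbc : b < c) :
    symmDiff (Ioo a c) (Ioc a b) = Ioo b c := by
  rw [← Ioc_union_Ioo_eq_Ioo hab hbc, symmDiff_of_ge subset_union_left, union_sdiff_left,
    sdiff_eq_left.2]
  exact disjoint_left.2 fun x hx h => h.2.not_gt hx.1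

section NegOneDiv

variable {𝕜 : Type*} [Field 𝕜] [LinearOrder 𝕜] [IsStrictOrderedRing 𝕜] {x r a b : 𝕜}

theorem lt_neg_one_div_iff (hx : x < 0) (hr : 0 < r) : r < -1 / x ↔ -1 / r < x := by
  rw [lt_div_iff_of_neg hx, div_lt_iff₀ hr, mul_comm]

theorem neg_one_div_le_iff (hx : x < 0) (hr : 0 < r) : -1 / x ≤ r ↔ x ≤ -1 / r := by
  rw [div_le_iff_of_neg hx, le_div_iff₀ hr, mul_comm]

theorem neg_one_div_neg (hr : 0 < r) : -1 / r < 0 := div_neg_of_neg_of_pos neg_one_lt_zero hr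

theorem neg_one_div_le_neg_one_div (ha : 0 < a) (hab : a ≤ b) : -1 / a ≤ -1 / b := by
  rw [neg_div, neg_div, neg_le_neg_iff]
  exact one_div_le_one_div_of_le ha hab

theorem neg_one_div_lt_neg_one_div (ha : 0 < a) (hab : a < b) : -1 / a < -1 / b := by
  rw [neg_div, neg_div, neg_lt_neg_iff]
  exact one_div_lt_one_div_of_lt ha hab

end NegOneDiv

def block (k : ℕ) : Set ℝ := Ioc (-(1 : ℝ) / (k + 2)) (-(1 : ℝ) / (k + 3))

/-- `x ∈ block k` iff `k + 2 < -1/x ≤ k + 3`, so for `x ∈ (-1/2, 0)` this is the `k` with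
`x ∈ block k`; junk elsewhere. -/
noncomputable def blockIndex (x : ℝ) : ℕ := ⌈-1 / x⌉₊ - 3

noncomputable def blockSign (x : ℝ) : ℝ := (-1) ^ blockIndex x

theorem three_le_ceil_neg_one_div {x : ℝ} (hx : x ∈ Ioo (-1 / 2) 0) : 3 ≤ ⌈-1 / x⌉₊ :=
  Nat.lt_ceil.2 (by exact_mod_cast (lt_neg_one_div_iff hx.2 two_pos).2 hx.1)

theorem mem_block_iff {k : ℕ} {x : ℝ} :
    x ∈ block k ↔ x ∈ Ioo (-1 / 2) 0 ∧ blockIndex x = k := by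
  have hk : ∀ {x : ℝ}, x < 0 → (x ∈ block k ↔ ⌈-1 / x⌉₊ = k + 3) := fun hx => by
    rw [Nat.ceil_eq_iff (by omega), show k + 3 - 1 = k + 2 by omega, block, mem_Ioc]
    push_cast
    rw [lt_neg_one_div_iff hx (by positivity), neg_one_div_le_iff hx (by positivity)]
  constructor
  · intro hx
    have hneg : x < 0 := hx.2.trans_lt (neg_one_div_neg (by positivity))
    refine ⟨⟨?_, hneg⟩, ?_⟩
    · exact (neg_one_div_le_neg_one_div two_pos (by simp)).trans_lt hx.1
    · rw [blockIndex, (hk hneg).1 hx, Nat.add_sub_cancel]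
  · rintro ⟨hx, rfl⟩
    have := three_le_ceil_neg_one_div hx
    rw [hk hx.2, blockIndex]
    omega

theorem blockIndex_lt_iff {x : ℝ} (hx : x ∈ Ioo (-1 / 2) 0) (n : ℕ) :
    blockIndex x < n - 1 ↔ x ≤ -1 / (n + 1) := by
  have := three_le_ceil_neg_one_div hx
  have hceil : blockIndex x < n - 1 ↔ ⌈-1 / x⌉₊ ≤ n + 1 := by rw [blockIndex]; omega
  rw [hceil, Nat.ceil_le]
  push_cast
  exact neg_one_div_le_iff hx.2 (by positivity)

theorem neg_one_pow_mul_indicator_block (k : ℕ) (x : ℝ) :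
    (-1 : ℝ) ^ (k + 2) * (block k).indicator 1 x =
      if x ∈ Ioo (-1 / 2) 0 ∧ k = blockIndex x then blockSign x else 0 := by
  by_cases hx : x ∈ block k
  · obtain ⟨hx', rfl⟩ := mem_block_iff.1 hx
    simp [hx, hx', blockSign, pow_add]
  · rw [indicator_of_notMem hx, mul_zero, if_neg fun h => hx (mem_block_iff.2 ⟨h.1, h.2.symm⟩)]

theorem Fser_eq_indicator : Fser = (Ioo (-1 / 2) 0).indicator blockSign := by
  ext x
  change ∑' k : ℕ, (-1 : ℝ) ^ (k + 2) * (block k).indicator 1 x = _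
  simp only [neg_one_pow_mul_indicator_block]
  by_cases hx : x ∈ Ioo (-1 / 2) 0
  · simp [hx, tsum_ite_eq]
  · simp [hx]

theorem Fpart_eq_indicator (n : ℕ) :
    Fpart n = (Ioc (-1 / 2 : ℝ) (-1 / (n + 1))).indicator blockSign := by
  ext x
  change ∑ k ∈ Finset.range (n - 1), (-1 : ℝ) ^ (k + 2) * (block k).indicator 1 x = _
  simp only [neg_one_pow_mul_indicator_block]
  by_cases hx : x ∈ Ioo (-1 / 2) 0
  · simp [hx, Finset.sum_ite_eq', blockIndex_lt_iff hx, indicator_apply, hx.1]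
  · have hneg : -1 / ((n : ℝ) + 1) < 0 := neg_one_div_neg (by positivity)
    rw [indicator_of_notMem fun h => hx ⟨h.1, h.2.trans_lt hneg⟩]
    simp [hx]

theorem abs_blockSign (x : ℝ) : |blockSign x| = 1 := by simp [blockSign]

theorem measurable_blockSign : Measurable blockSign :=
  (measurable_from_nat (f := fun m : ℕ => (-1 : ℝ) ^ (m - 3))).comp
    (measurable_id.const_div (-1 : ℝ)).nat_ceil

theorem abs_Fser_sub_Fpart {n : ℕ} (hn : 1 ≤ n) (x : ℝ) :
    |Fser x - Fpart n x| = (Ioo (-1 / (n + 1 : ℝ)) 0).indicator 1 x := by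
  have hb : -1 / 2 ≤ -1 / ((n : ℝ) + 1) :=
    neg_one_div_le_neg_one_div two_pos (by exact_mod_cast Nat.succ_le_succ hn)
  have hb' : -1 / ((n : ℝ) + 1) < 0 := neg_one_div_neg (by positivity)
  rw [Fser_eq_indicator, Fpart_eq_indicator, ← abs_indicator_symmDiff, symmDiff_Ioo_Ioc hb hb']
  by_cases hx : x ∈ Ioo (-1 / (n + 1 : ℝ)) 0 <;> simp [hx, abs_blockSign]

theorem volume_real_Ioo_neg_one_div (n : ℕ) :
    volume.real (Ioo (-1 / (n + 1 : ℝ)) 0) = 1 / (n + 1) := by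
  rw [Real.volume_real_Ioo_of_le (neg_one_div_neg (by positivity)).le]
  ring

theorem setIntegral_abs_Fser_sub_Fpart {n : ℕ} (hn : 1 ≤ n) (s : Set ℝ) :
    ∫ x in s, |Fser x - Fpart n x| = volume.real (Ioo (-1 / (n + 1 : ℝ)) 0 ∩ s) := by
  simp_rw [abs_Fser_sub_Fpart hn]
  rw [integral_indicator_one measurableSet_Ioo, measureReal_restrict_apply measurableSet_Ioo]

theorem abs_intervalIntegral_Fser_sub_Fpart_le {n : ℕ} (hn : 1 ≤ n) {c d : ℝ} (hcd : c ≤ d) :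
    |∫ x in c..d, (Fser x - Fpart n x)| ≤ 1 / (n + 1) :=
  calc |∫ x in c..d, (Fser x - Fpart n x)|
      ≤ ∫ x in c..d, |Fser x - Fpart n x| := abs_integral_le_integral_abs hcd
    _ = volume.real (Ioo (-1 / (n + 1 : ℝ)) 0 ∩ Ioc c d) := by
      rw [integral_of_le hcd, setIntegral_abs_Fser_sub_Fpart hn]
    _ ≤ volume.real (Ioo (-1 / (n + 1 : ℝ)) 0) :=
      measureReal_mono inter_subset_left measure_Ioo_lt_top.ne
    _ = 1 / (n + 1) := volume_real_Ioo_neg_one_div n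

theorem Fser_neg_one_div (k : ℕ) : Fser (-1 / (k + 3)) = (-1) ^ k := by
  have hk : (-1 / (k + 3 : ℝ)) ∈ block k :=
    ⟨neg_one_div_lt_neg_one_div (by positivity) (by linarith), le_rfl⟩
  obtain ⟨hmem, hidx⟩ := mem_block_iff.1 hk
  rw [Fser_eq_indicator, indicator_of_mem hmem, blockSign, hidx]

theorem not_tendsto_neg_one_pow (L : ℝ) : ¬ Tendsto (fun n : ℕ => (-1 : ℝ) ^ n) atTop (𝓝 L) := by
  intro h
  have hL : L = -L := by
    refine tendsto_nhds_unique ((tendsto_add_atTop_iff_nat 1).2 h) ?_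
    simpa [pow_succ] using h.neg
  have habs : |L| = 1 := tendsto_nhds_unique h.abs (by simp)
  simp [show L = 0 by linarith] at habs

theorem tendsto_neg_one_div_add_three_nhdsLT :
    Tendsto (fun k : ℕ => -1 / (k + 3 : ℝ)) atTop (𝓝[<] 0) := by
  refine tendsto_nhdsWithin_iff.2 ⟨?_, .of_forall fun k => ?_⟩
  · simpa using (tendsto_add_atTop_iff_nat 3).2 (tendsto_const_div_atTop_nhds_zero_nat (-1))
  · exact neg_one_div_neg (by positivity : (0 : ℝ) < k + 3)

theorem not_tendsto_Fser_nhdsLT_zero (L : ℝ) : ¬ Tendsto Fser (𝓝[<] 0) (𝓝 L) := fun h =>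
  not_tendsto_neg_one_pow L <| by
    simpa [Function.comp_def, Fser_neg_one_div] using h.comp tendsto_neg_one_div_add_three_nhdsLT

theorem integrableOn_Fser (s : Set ℝ) (hs : volume s ≠ ⊤) : IntegrableOn Fser s := by
  refine Measure.integrableOn_of_bounded (M := 1) hs ?_ (.of_forall fun x => ?_)
  · rw [Fser_eq_indicator]
    exact (measurable_blockSign.indicator measurableSet_Ioo).aestronglyMeasurable
  · rw [Fser_eq_indicator, Real.norm_eq_abs]
    by_cases hx : x ∈ Ioo (-1 / 2 : ℝ) 0 <;> simp [hx, abs_blockSign]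

theorem tendsto_Fpart_nhdsLT (n : ℕ) (c : ℝ) : Tendsto (Fpart n) (𝓝[<] c) (𝓝 (Fpart n c)) :=
  tendsto_finsetSum _ fun _ _ => (tendsto_indicator_Ioc_nhdsLT _ _ c 1).const_mul _

/-- On `[-1,0]`: `F` is Lebesgue integrable; each partial sum `F_n` is left continuous;
`‖F - F_n‖_{L¹} = 1/(n+1)`; `F_n → F` in the Alexiewicz norm; but `F` has no left limit
at `0`, so the space of left continuous integrable functions is complete neither in the
Alexiewicz norm nor in the `L¹` norm. -/
theorem leftContinuous_integrable_not_complete :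
    IntegrableOn Fser (Icc (-1 : ℝ) 0) volume ∧
    (∀ n : ℕ, ∀ c ∈ Ioc (-1 : ℝ) 0,
      Tendsto (Fpart n) (𝓝[<] c) (𝓝 (Fpart n c))) ∧
    (∀ n : ℕ, 2 ≤ n →
      ∫ x in Icc (-1 : ℝ) 0, |Fser x - Fpart n x| = 1 / (n + 1)) ∧
    (∀ ε > (0 : ℝ), ∃ N : ℕ, ∀ n ≥ N, ∀ c d : ℝ, -1 ≤ c → c ≤ d → d ≤ 0 →
      |∫ x in c..d, (Fser x - Fpart n x)| ≤ ε) ∧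
    ¬ ∃ L : ℝ, Tendsto Fser (𝓝[<] (0 : ℝ)) (𝓝 L) := by
  refine ⟨integrableOn_Fser _ measure_Icc_lt_top.ne, fun n c _ => tendsto_Fpart_nhdsLT n c,
    fun n hn => ?_, fun ε hε => ?_, fun ⟨L, hL⟩ => not_tendsto_Fser_nhdsLT_zero L hL⟩
  · have hsub : Ioo (-1 / (n + 1 : ℝ)) 0 ⊆ Icc (-1) 0 :=
      Ioo_subset_Icc_self.trans <| Icc_subset_Icc
        (by simpa using neg_one_div_le_neg_one_div one_pos (by simp : (1 : ℝ) ≤ n + 1)) le_rfl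
    rw [setIntegral_abs_Fser_sub_Fpart (by omega), inter_eq_left.2 hsub,
      volume_real_Ioo_neg_one_div]
  · obtain ⟨N, hN⟩ := exists_nat_one_div_lt hε
    refine ⟨N + 1, fun n hn c d _ hcd _ => ?_⟩
    calc |∫ x in c..d, (Fser x - Fpart n x)| ≤ 1 / (n + 1) :=
          abs_intervalIntegral_Fser_sub_Fpart_le (by omega) hcd
      _ ≤ 1 / (N + 1) := by gcongr; exact_mod_cast (Nat.le_succ N).trans hn
      _ ≤ ε := hN.le
end

section
/- Given any left gauge γ on (a,b] (a map assigning to each y ∈ (a,b] an interval γ(y) = (x,y] with x ∈ (a,y)), there exists a γ-fine left partition of (a,b]: a countable collection of mutually disjoint intervals of the form (x_i, y_i] whose union is (a,b] and such that (x_i, y_i] ⊆ γ(y_i) for each i. -/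
open Set Filter Topology

/-- For every left gauge `γ` on `(a,b]` (assigning to each `y ∈ (a,b]` an interval
`(γ(y), y]` with `a ≤ γ(y) < y`) there exists a `γ`-fine left partition of `(a,b]`:
a countable collection of pairwise disjoint intervals `(c i, d i]` whose union is
`(a,b]`, each contained in `(γ(d i), d i]`. -/
theorem exists_gammaFine_left_partition
    (a b : ℝ) (hab : a < b) (γ : ℝ → ℝ)
    (hγ : ∀ y ∈ Ioc a b, a ≤ γ y ∧ γ y < y) :
    ∃ c d : ℕ → ℝ,
      (∀ i j, i ≠ j → Disjoint (Ioc (c i) (d i)) (Ioc (c j) (d j))) ∧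
      (⋃ i, Ioc (c i) (d i)) = Ioc a b ∧
      (∀ i, Ioc (c i) (d i) ⊆ Ioc (γ (d i)) (d i)) := by
  classical
  -- The collection of "partial partitions": families of pairwise disjoint fine
  -- intervals whose union is `Ioc x b` for some `x ∈ [a,b]`.
  set 𝒜 : Set (Set (ℝ × ℝ)) :=
    {F | (∀ p ∈ F, γ p.2 ≤ p.1 ∧ p.1 < p.2 ∧ p.2 ≤ b) ∧
      (F.Pairwise fun p q => Disjoint (Ioc p.1 p.2) (Ioc q.1 q.2)) ∧
      ∃ x ∈ Icc a b, (⋃ p ∈ F, Ioc p.1 p.2) = Ioc x b} with h𝒜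
  -- the starting element
  have hb : b ∈ Ioc a b := ⟨hab, le_rfl⟩
  obtain ⟨hγb₁, hγb₂⟩ := hγ b hb
  have hF₀ : ({((γ b : ℝ), b)} : Set (ℝ × ℝ)) ∈ 𝒜 := by
    refine ⟨?_, ?_, γ b, ⟨hγb₁, hγb₂.le.trans le_rfl⟩, ?_⟩
    · rintro p hp
      simp only [mem_singleton_iff] at hp
      subst hp
      exact ⟨le_rfl, hγb₂, le_rfl⟩
    · exact Set.pairwise_singleton _ _
    · simp
  -- Zorn's lemma: chains have upper bounds
  have hchain : ∀ c ⊆ 𝒜, IsChain (· ⊆ ·) c → c.Nonempty →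
      ∃ ub ∈ 𝒜, ∀ s ∈ c, s ⊆ ub := by
    intro C hC hchainC hCne
    refine ⟨⋃₀ C, ?_, fun s hs => subset_sUnion_of_mem hs⟩
    constructor
    · rintro p ⟨F, hF, hpF⟩
      exact (hC hF).1 p hpF
    constructor
    · rintro p ⟨F, hF, hpF⟩ q ⟨G, hG, hqG⟩ hpq
      rcases hchainC.total hF hG with h | h
      · exact (hC hG).2.1 (h hpF) hqG hpq
      · exact (hC hF).2.1 hpF (h hqG) hpq
    · -- the union of the chain is `Ioc (sInf xs) b`
      set xs : Set ℝ := {x | x ∈ Icc a b ∧ ∃ F ∈ C, (⋃ p ∈ F, Ioc p.1 p.2) = Ioc x b}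
        with hxs
      have hxs_ne : xs.Nonempty := by
        obtain ⟨F, hF⟩ := hCne
        obtain ⟨x, hx, hxeq⟩ := (hC hF).2.2
        exact ⟨x, hx, F, hF, hxeq⟩
      have hxs_bdd : BddBelow xs := ⟨a, fun x hx => hx.1.1⟩
      refine ⟨sInf xs, ⟨?_, ?_⟩, ?_⟩
      · exact le_csInf hxs_ne fun x hx => hx.1.1
      · obtain ⟨x, hx⟩ := hxs_ne
        exact (csInf_le hxs_bdd hx).trans hx.1.2
      · ext t
        simp only [mem_iUnion, mem_sUnion, exists_prop]
        constructor
        · rintro ⟨p, ⟨F, hF, hpF⟩, htp⟩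
          obtain ⟨x, hx, hxeq⟩ := (hC hF).2.2
          have : t ∈ Ioc x b := by
            rw [← hxeq]; exact mem_biUnion hpF htp
          exact ⟨lt_of_le_of_lt (csInf_le hxs_bdd ⟨hx, F, hF, hxeq⟩) this.1, this.2⟩
        · rintro ⟨ht1, ht2⟩
          obtain ⟨x, hx, hxt⟩ := (csInf_lt_iff hxs_bdd hxs_ne).1 ht1
          obtain ⟨hx', F, hF, hxeq⟩ := hx
          have : t ∈ ⋃ p ∈ F, Ioc p.1 p.2 := by rw [hxeq]; exact ⟨hxt, ht2⟩
          obtain ⟨p, hpF, htp⟩ := mem_iUnion₂.1 this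
          exact ⟨p, ⟨F, hF, hpF⟩, htp⟩
  obtain ⟨M, -, hM⟩ := zorn_subset_nonempty 𝒜 hchain _ hF₀
  obtain ⟨hMfine, hMdisj, x, hx, hMun⟩ := hM.prop
  -- the maximal element must reach down to `a`
  have hxa : x = a := by
    by_contra hxa
    have hxab : x ∈ Ioc a b := ⟨lt_of_le_of_ne hx.1 (Ne.symm hxa), hx.2⟩
    obtain ⟨hγx₁, hγx₂⟩ := hγ x hxab
    set p : ℝ × ℝ := (γ x, x) with hp
    have hdisj_new : ∀ q ∈ M, Disjoint (Ioc (γ x) x) (Ioc q.1 q.2) := by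
      intro q hq
      have hsub : Ioc q.1 q.2 ⊆ Ioc x b := by
        rw [← hMun]
        exact Set.subset_biUnion_of_mem (u := fun p : ℝ × ℝ => Ioc p.1 p.2) hq
      exact (Iic_disjoint_Ioi le_rfl).mono Ioc_subset_Iic_self
        (hsub.trans Ioc_subset_Ioi_self)
    have hM' : insert p M ∈ 𝒜 := by
      refine ⟨?_, ?_, γ x, ⟨hγx₁, hγx₂.le.trans hxab.2⟩, ?_⟩
      · rintro q (rfl | hq)
        · exact ⟨le_rfl, hγx₂, hxab.2⟩
        · exact hMfine q hq
      · refine Set.pairwise_insert.2 ⟨hMdisj, ?_⟩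
        intro q hq _
        exact ⟨hdisj_new q hq, (hdisj_new q hq).symm⟩
      · rw [Set.biUnion_insert, hMun]
        exact Set.Ioc_union_Ioc_eq_Ioc hγx₂.le hxab.2
    have hpM : p ∈ M := by
      have heq := hM.eq_of_ge (y := insert p M) hM' (subset_insert _ _)
      rw [← heq]; exact mem_insert _ _
    have hsub2 : Ioc (γ x) x ⊆ Ioc x b := by
      rw [← hMun]
      exact Set.subset_biUnion_of_mem (u := fun p : ℝ × ℝ => Ioc p.1 p.2) hpM
    exact absurd (hsub2 ⟨hγx₂, le_rfl⟩).1 (lt_irrefl x)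
  rw [hxa] at hMun
  clear hx hxa
  -- `M` is countable
  have hMne : M.Nonempty := by
    have hbmem : b ∈ ⋃ p ∈ M, Ioc p.1 p.2 := by rw [hMun]; exact ⟨hab, le_rfl⟩
    obtain ⟨p, hp, -⟩ := mem_iUnion₂.1 hbmem
    exact ⟨p, hp⟩
  have hMcount : M.Countable := by
    apply Set.PairwiseDisjoint.countable_of_isOpen
      (s := fun p : ℝ × ℝ => Ioo p.1 p.2) (a := M)
    · intro q hq r hr hqr
      exact (hMdisj hq hr hqr).mono Ioo_subset_Ioc_self Ioo_subset_Ioc_self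
    · intro q _; exact isOpen_Ioo
    · intro q hq; exact nonempty_Ioo.2 (hMfine q hq).2.1
  obtain ⟨f, hf⟩ := hMcount.exists_eq_range hMne
  -- deduplicate `f`
  set D : ℕ → ℝ × ℝ := fun i => if ∃ j < i, f j = f i then (a, a) else f i with hD
  have hDmem : ∀ i, D i = (a, a) ∨ (D i = f i ∧ D i ∈ M ∧ ∀ j < i, f j ≠ f i) := by
    intro i
    by_cases h : ∃ j < i, f j = f i
    · left; simp only [hD]; rw [if_pos h]
    · have hD' : D i = f i := by simp only [hD]; rw [if_neg h]
      right
      exact ⟨hD', hD' ▸ (hf ▸ mem_range_self i), fun j hj hc => h ⟨j, hj, hc⟩⟩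
  have hDsurj : ∀ q ∈ M, ∃ i, D i = q := by
    intro q hq
    have hex : ∃ i, f i = q := by rw [hf] at hq; exact hq
    refine ⟨Nat.find hex, ?_⟩
    have h1 : f (Nat.find hex) = q := Nat.find_spec hex
    have h2 : ¬ ∃ j < Nat.find hex, f j = f (Nat.find hex) := by
      rintro ⟨j, hj, hjeq⟩
      exact Nat.find_min hex hj (hjeq.trans h1)
    simp [hD, if_neg h2, h1]
  refine ⟨fun i => (D i).1, fun i => (D i).2, ?_, ?_, ?_⟩
  · intro i j hij
    show Disjoint (Ioc (D i).1 (D i).2) (Ioc (D j).1 (D j).2)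
    rcases hDmem i with hi | ⟨hfi, hiM, hinew⟩
    · rw [hi]; simp
    rcases hDmem j with hj | ⟨hfj, hjM, hjnew⟩
    · rw [hj]; simp
    have hne : D i ≠ D j := by
      rw [hfi, hfj]
      rcases lt_or_gt_of_ne hij with h | h
      · exact fun hc => hjnew i h hc
      · exact fun hc => (hinew j h hc.symm)
    exact hMdisj hiM hjM hne
  · apply Set.Subset.antisymm
    · refine Set.iUnion_subset fun i => ?_
      show Ioc (D i).1 (D i).2 ⊆ Ioc a b
      rcases hDmem i with hi | ⟨-, hiM, -⟩
      · rw [hi]; simp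
      · rw [← hMun]
        exact Set.subset_biUnion_of_mem (u := fun p : ℝ × ℝ => Ioc p.1 p.2) hiM
    · rw [← hMun]
      refine Set.iUnion₂_subset fun q hq => ?_
      obtain ⟨i, hi⟩ := hDsurj q hq
      rw [← hi]
      exact le_iSup (fun i => Ioc (D i).1 (D i).2) i
  · intro i
    show Ioc (D i).1 (D i).2 ⊆ Ioc (γ (D i).2) (D i).2
    rcases hDmem i with hi | ⟨-, hiM, -⟩
    · rw [hi]; simp
    · exact Ioc_subset_Ioc (hMfine _ hiM).1 le_rfl
end

section
/- Let F : [0,1] → ℝ be left regulated with F(1−) := lim_{t→1−} F(t) existing and define G_n : [0,1] → [0,1] for n ∈ ℕ by G_n(0)=0 and G_n(x) = inf{y ∈ [0,x) : |F(s)−F(t)| ≤ 1/n for all s,t ∈ (y,x)} for x ∈ (0,1]. Then G_n is increasing (x ≤ y implies G_n(x) ≤ G_n(y)) and G_n(x) < x for all x ∈ (0,1]. -/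
open Set Filter Topology

/-- For a left regulated `F : [0,1] → ℝ`, the functions
`G_n(x) = inf {y ∈ [0,x) : |F(s) - F(t)| ≤ 1/n for all s,t ∈ (y,x)}` (with `G_n(0) = 0`)
are increasing and satisfy `G_n(x) < x` for all `x ∈ (0,1]`. -/
theorem Gn_increasing_and_lt
    (F : ℝ → ℝ) (G : ℕ → ℝ → ℝ)
    (hreg : ∀ t ∈ Ioc (0 : ℝ) 1, ∃ L : ℝ, Tendsto F (𝓝[Ioo 0 t] t) (𝓝 L))
    (hG0 : ∀ n : ℕ, G n 0 = 0)
    (hGdef : ∀ n : ℕ, 1 ≤ n → ∀ x ∈ Ioc (0 : ℝ) 1,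
      G n x = sInf {y : ℝ | y ∈ Ico (0 : ℝ) x ∧
        ∀ s ∈ Ioo y x, ∀ t ∈ Ioo y x, |F s - F t| ≤ 1 / n}) :
    ∀ n : ℕ, 1 ≤ n →
      (∀ x y : ℝ, 0 ≤ x → x ≤ y → y ≤ 1 → G n x ≤ G n y) ∧
      (∀ x ∈ Ioc (0 : ℝ) 1, G n x < x) := by
  intro n hn
  have hnpos : (0:ℝ) < n := by exact_mod_cast hn
  set S : ℝ → Set ℝ := fun x => {y : ℝ | y ∈ Ico (0 : ℝ) x ∧
        ∀ s ∈ Ioo y x, ∀ t ∈ Ioo y x, |F s - F t| ≤ 1 / n} with hS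
  have hbdd : ∀ x : ℝ, BddBelow (S x) := fun x => ⟨0, fun z hz => hz.1.1⟩
  -- nonemptiness via a witness
  have key : ∀ x ∈ Ioc (0:ℝ) 1, ∃ y, y ∈ S x := by
    intro x hx
    obtain ⟨L, hL⟩ := hreg x hx
    have h2n : (0:ℝ) < 1/(2*n) := by positivity
    have hmem : F ⁻¹' Metric.closedBall L (1/(2*n)) ∈ 𝓝[Ioo 0 x] x :=
      hL (Metric.closedBall_mem_nhds L h2n)
    rw [Metric.mem_nhdsWithin_iff] at hmem
    obtain ⟨ε, hε, hball⟩ := hmem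
    refine ⟨max (x - ε) 0, ⟨le_max_right _ _, ?_⟩, ?_⟩
    · exact max_lt (by linarith) hx.1
    · have hsub : ∀ s ∈ Ioo (max (x - ε) 0) x, |F s - L| ≤ 1/(2*n) := by
        intro s hs
        have hs0 : 0 < s := lt_of_le_of_lt (le_max_right _ _) hs.1
        have hsε : x - ε < s := lt_of_le_of_lt (le_max_left _ _) hs.1
        have : s ∈ Metric.ball x ε ∩ Ioo 0 x := by
          constructor
          · rw [Metric.mem_ball, Real.dist_eq, abs_sub_lt_iff]
            constructor <;> linarith [hs.2]
          · exact ⟨hs0, hs.2⟩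
        have := hball this
        simpa [Metric.mem_closedBall, Real.dist_eq] using this
      intro s hs t ht
      have h1 := hsub s hs
      have h2 := hsub t ht
      have : |F s - F t| ≤ |F s - L| + |F t - L| := by
        calc |F s - F t| = |(F s - L) - (F t - L)| := by ring_nf
          _ ≤ |F s - L| + |F t - L| := abs_sub _ _
      have hne : (n:ℝ) ≠ 0 := hnpos.ne'
      have hhalf : 1/(2*(n:ℝ)) + 1/(2*(n:ℝ)) = 1/(n:ℝ) := by field_simp; norm_num
      linarith
  have hlt : ∀ x ∈ Ioc (0:ℝ) 1, G n x < x := by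
    intro x hx
    obtain ⟨y, hy⟩ := key x hx
    rw [hGdef n hn x hx]
    exact lt_of_le_of_lt (csInf_le (hbdd x) hy) hy.1.2
  have hge0 : ∀ x ∈ Ioc (0:ℝ) 1, 0 ≤ G n x := by
    intro x hx
    obtain ⟨y, hy⟩ := key x hx
    rw [hGdef n hn x hx]
    exact le_csInf ⟨y, hy⟩ (fun z hz => hz.1.1)
  refine ⟨?_, hlt⟩
  intro x y hx0 hxy hy1
  rcases hx0.eq_or_lt with hx0' | hx0'
  · subst hx0'
    rw [hG0]
    rcases hxy.eq_or_lt with hy0 | hy0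
    · rw [← hy0, hG0]
    · exact hge0 y ⟨hy0, hy1⟩
  · rcases hxy.eq_or_lt with rfl | hxy'
    · exact le_rfl
    · have hx1 : x ≤ 1 := le_of_lt (lt_of_lt_of_le hxy' hy1)
      have hxI : x ∈ Ioc (0:ℝ) 1 := ⟨hx0', hx1⟩
      have hyI : y ∈ Ioc (0:ℝ) 1 := ⟨lt_trans hx0' hxy', hy1⟩
      rw [hGdef n hn y hyI]
      refine le_csInf (key y hyI) ?_
      intro z hz
      by_cases hzx : z < x
      · rw [hGdef n hn x hxI]
        refine csInf_le (hbdd x) ⟨⟨hz.1.1, hzx⟩, ?_⟩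
        intro s hs t ht
        exact hz.2 s ⟨hs.1, lt_trans hs.2 hxy'⟩ t ⟨ht.1, lt_trans ht.2 hxy'⟩
      · exact le_trans (hlt x hxI).le (not_lt.1 hzx)
end

section
/- Let (E,≤) be an ordered vector space of real functions and F : E → E. Suppose there is an increasing map G on the nonnegative cone with the property: for all y,z ∈ E, |F(y) − F(z)| ≤ G(|y − z|) pointwise, and for every u ≥ 0 there exists w₀ ≥ u such that the decreasing iterates of G starting from w₀ along the inversely well-ordered chain generated by G have infimum 0. Then F has at most one fixed point. -/
open Filter Topology

/-- Uniqueness lemma: if `F` on a space of real functions satisfies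
`|F(y) - F(z)| ≤ G(|y - z|)` pointwise, where `G` is increasing on the nonnegative cone,
maps it into itself, `G(0) = 0`, and the iterates `Gⁿ(w₀)` tend to `0` pointwise for every
`w₀ ≥ 0`, then `F` has at most one fixed point. -/
theorem fixed_point_unique
    {X : Type*} (F G : (X → ℝ) → (X → ℝ))
    (hGmono : ∀ u v : X → ℝ, 0 ≤ u → u ≤ v → G u ≤ G v)
    (hGpos : ∀ u : X → ℝ, 0 ≤ u → 0 ≤ G u)
    (hG0 : G 0 = 0)
    (hGiter : ∀ w : X → ℝ, 0 ≤ w → ∀ x : X,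
      Tendsto (fun n : ℕ => G^[n] w x) atTop (𝓝 0))
    (hF : ∀ y z : X → ℝ, ∀ x : X, |F y x - F z x| ≤ G (fun t => |y t - z t|) x) :
    ∀ y z : X → ℝ, F y = y → F z = z → y = z := by
  intro y z hy hz
  set w : X → ℝ := fun t => |y t - z t| with hw
  have hw0 : 0 ≤ w := fun t => abs_nonneg _
  have hwG : w ≤ G w := by
    intro x
    have := hF y z x
    rwa [hy, hz] at this
  have hpos : ∀ n, 0 ≤ G^[n] w := by
    intro n
    induction n with
    | zero => exact hw0
    | succ n ih => rw [Function.iterate_succ_apply']; exact hGpos _ ih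
  have hstep : ∀ n, G^[n] w ≤ G^[n+1] w := by
    intro n
    induction n with
    | zero => exact hwG
    | succ m ihm =>
      rw [Function.iterate_succ_apply', Function.iterate_succ_apply']
      exact hGmono _ _ (hpos m) ihm
  have hle : ∀ n, w ≤ G^[n] w := by
    intro n
    induction n with
    | zero => exact le_refl _
    | succ n ih => exact le_trans ih (hstep n)
  have hwzero : ∀ x, w x = 0 := by
    intro x
    have hlim := hGiter w hw0 x
    have : w x ≤ 0 := le_of_tendsto_of_tendsto' tendsto_const_nhds hlim
      (fun n => hle n x)
    exact le_antisymm this (hw0 x)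
  funext x
  have := hwzero x
  have : |y x - z x| = 0 := this
  linarith [abs_eq_zero.mp this]
end

section
/- Let f₁,…,f_m : L¹([a,b])^m → L¹([a,b]) be increasing maps (with respect to a.e. pointwise componentwise order) such that the operators F_i(x)(t) = ∫_a^t f_i(x)(s) ds satisfy ‖F_i(x)‖_{L¹} ≤ R whenever ‖x_j‖_{L¹} ≤ R for all j. Then the operator F = (F₁,…,F_m) has minimal and maximal fixed points in the ball B(R) = {x ∈ L¹([a,b])^m : max_i ‖x_i‖_{L¹} ≤ R}. -/
open MeasureTheory Set

section FixedPointAux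
open Filter Topology


section aux
variable {α : Type*} [MeasurableSpace α] {μ : Measure α}

lemma phi_mono {x y : Lp ℝ 1 μ} (h : x ≤ y) :
    (∫ t, (x : α → ℝ) t ∂μ) ≤ ∫ t, (y : α → ℝ) t ∂μ :=
  integral_mono_ae (L1.integrable_coeFn x) (L1.integrable_coeFn y) ((Lp.coeFn_le x y).mpr h)

lemma phi_strict {x y : Lp ℝ 1 μ} (h : x ≤ y)
    (h2 : (∫ t, (y : α → ℝ) t ∂μ) ≤ ∫ t, (x : α → ℝ) t ∂μ) : x = y := by
  have hle : (x : α → ℝ) ≤ᵐ[μ] (y : α → ℝ) := (Lp.coeFn_le x y).mpr h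
  have hsub : ((y - x : Lp ℝ 1 μ) : α → ℝ) =ᵐ[μ] fun t => (y : α → ℝ) t - (x : α → ℝ) t :=
    Lp.coeFn_sub y x
  have hnn : 0 ≤ᵐ[μ] fun t => (y : α → ℝ) t - (x : α → ℝ) t := by
    filter_upwards [hle] with t ht using sub_nonneg.mpr ht
  have hint : Integrable (fun t => (y : α → ℝ) t - (x : α → ℝ) t) μ :=
    (L1.integrable_coeFn y).sub (L1.integrable_coeFn x)
  have hz : (∫ t, ((y : α → ℝ) t - (x : α → ℝ) t) ∂μ) = 0 := by
    rw [integral_sub (L1.integrable_coeFn y) (L1.integrable_coeFn x)]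
    linarith [phi_mono h]
  have := (integral_eq_zero_iff_of_nonneg_ae hnn hint).mp hz
  have heq : (x : α → ℝ) =ᵐ[μ] (y : α → ℝ) := by
    filter_upwards [this] with t ht
    have : (y : α → ℝ) t - (x : α → ℝ) t = 0 := ht
    linarith
  exact Lp.ext heq

lemma norm_sub_of_le {x y : Lp ℝ 1 μ} (h : x ≤ y) :
    ‖y - x‖ = (∫ t, (y : α → ℝ) t ∂μ) - ∫ t, (x : α → ℝ) t ∂μ := by
  have hle : (x : α → ℝ) ≤ᵐ[μ] (y : α → ℝ) := (Lp.coeFn_le x y).mpr h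
  rw [L1.norm_eq_integral_norm]
  rw [show (∫ t, ‖((y - x : Lp ℝ 1 μ) : α → ℝ) t‖ ∂μ)
      = ∫ t, ((y : α → ℝ) t - (x : α → ℝ) t) ∂μ from
    integral_congr_ae (by
      filter_upwards [Lp.coeFn_sub y x, hle] with t ht hle'
      rw [ht]; exact Real.norm_of_nonneg (sub_nonneg.mpr hle'))]
  exact integral_sub (L1.integrable_coeFn y) (L1.integrable_coeFn x)

lemma abs_phi_le (x : Lp ℝ 1 μ) : |∫ t, (x : α → ℝ) t ∂μ| ≤ ‖x‖ := by
  rw [L1.norm_eq_integral_norm]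
  calc |∫ t, (x : α → ℝ) t ∂μ| = ‖∫ t, (x : α → ℝ) t ∂μ‖ := (Real.norm_eq_abs _).symm
    _ ≤ ∫ t, ‖(x : α → ℝ) t‖ ∂μ := norm_integral_le_integral_norm _

lemma mono_bdd_tendsto {u : ℕ → Lp ℝ 1 μ} {R : ℝ} (hm : Monotone u)
    (hb : ∀ n, ‖u n‖ ≤ R) : ∃ v, Tendsto u atTop (𝓝 v) := by
  set c : ℕ → ℝ := fun n => ∫ t, (u n : α → ℝ) t ∂μ with hc
  have hcm : Monotone c := fun n k hnk => phi_mono (hm hnk)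
  have hcb : BddAbove (Set.range c) := by
    refine ⟨R, fun r ⟨n, hn⟩ => ?_⟩
    rw [← hn]
    exact (le_abs_self _).trans ((abs_phi_le (u n)).trans (hb n))
  have hconv : Tendsto c atTop (𝓝 (⨆ n, c n)) := tendsto_atTop_ciSup hcm hcb
  have hcauchy : CauchySeq c := hconv.cauchySeq
  have key : ∀ n k, n ≤ k → dist (u n) (u k) = dist (c n) (c k) := by
    intro n k hnk
    rw [dist_eq_norm', dist_eq_norm']
    rw [norm_sub_of_le (hm hnk), Real.norm_eq_abs, abs_of_nonneg (sub_nonneg.mpr (hcm hnk))]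
  have : CauchySeq u := by
    rw [Metric.cauchySeq_iff]
    intro ε hε
    obtain ⟨N, hN⟩ := Metric.cauchySeq_iff.mp hcauchy ε hε
    refine ⟨N, fun k hk n hn => ?_⟩
    rcases le_total n k with h | h
    · rw [dist_comm, key n k h]; exact hN n hn k hk
    · rw [key k n h]; exact hN k hk n hn
  exact cauchySeq_tendsto_of_complete this

lemma zorn_min {β : Type*} [PartialOrder β] (s : Set β)
    (ih : ∀ c ⊆ s, IsChain (· ≤ ·) c → ∀ y ∈ c, ∃ lb ∈ s, ∀ z ∈ c, lb ≤ z)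
    (x : β) (hxs : x ∈ s) :
    ∃ mi ∈ s, mi ≤ x ∧ ∀ z ∈ s, z ≤ mi → z = mi := by
  obtain ⟨mm, hmx, hmem, hmax⟩ :=
    zorn_le_nonempty₀ (α := βᵒᵈ) s
      (fun c hcs hc y hy => by
        obtain ⟨lb, hlbs, hlb⟩ := ih c hcs hc.symm y hy
        exact ⟨lb, hlbs, fun z hz => hlb z hz⟩) x hxs
  exact ⟨mm, hmem, hmx, fun z hz hle => le_antisymm hle (hmax hz hle)⟩

lemma Phi_strict {m : ℕ} {x y : Fin m → Lp ℝ 1 μ} (h : x ≤ y)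
    (h2 : (∑ i, ∫ t, (y i : α → ℝ) t ∂μ) ≤ ∑ i, ∫ t, (x i : α → ℝ) t ∂μ) : x = y := by
  have h1 : ∀ i ∈ Finset.univ, (∫ t, (x i : α → ℝ) t ∂μ) ≤ ∫ t, (y i : α → ℝ) t ∂μ :=
    fun i _ => phi_mono (h i)
  have heq := (Finset.sum_eq_sum_iff_of_le h1).mp (le_antisymm (Finset.sum_le_sum h1) h2)
  funext i
  exact phi_strict (h i) (heq i (Finset.mem_univ i)).ge

set_option maxHeartbeats 1000000 in
set_option synthInstance.maxHeartbeats 400000 in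
lemma zmin {m : ℕ} (K : (Fin m → Lp ℝ 1 μ) → Fin m → Lp ℝ 1 μ)
    (hKmono : Monotone K) (R : ℝ)
    (hKball : ∀ x, (∀ j, ‖x j‖ ≤ R) → ∀ j, ‖K x j‖ ≤ R)
    (p : Fin m → Lp ℝ 1 μ) (hp1 : ∀ j, ‖p j‖ ≤ R) (hp2 : K p ≤ p) :
    ∃ u, (∀ j, ‖u j‖ ≤ R) ∧ K u = u ∧
      ∀ y, (∀ j, ‖y j‖ ≤ R) → K y = y → y ≤ u → y = u := by
  set D : Set (Fin m → Lp ℝ 1 μ) := {x | (∀ j, ‖x j‖ ≤ R) ∧ K x ≤ x} with hD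
  have hchain : ∀ c ⊆ D, IsChain (· ≤ ·) c → ∀ y ∈ c, ∃ lb ∈ D, ∀ z ∈ c, lb ≤ z := by
    intro c hcD hchain y0 hy0
    set Φ : (Fin m → Lp ℝ 1 μ) → ℝ := fun x => ∑ i, ∫ t, (x i : α → ℝ) t ∂μ with hΦ
    have hΦmono : ∀ {x y : Fin m → Lp ℝ 1 μ}, x ≤ y → Φ x ≤ Φ y := fun {x y} h =>
      Finset.sum_le_sum fun i _ => phi_mono (h i)
    have hne : (Φ '' c).Nonempty := ⟨Φ y0, ⟨y0, hy0, rfl⟩⟩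
    have hbdd : BddBelow (Φ '' c) := by
      refine ⟨-(m * R), ?_⟩
      rintro r ⟨z, hz, rfl⟩
      have h1 : ∀ i ∈ Finset.univ, -R ≤ ∫ t, (z i : α → ℝ) t ∂μ := fun i _ =>
        neg_le_of_abs_le ((abs_phi_le (z i)).trans ((hcD hz).1 i))
      calc -(m * R) = ∑ _i : Fin m, -R := by
            rw [Finset.sum_const, Finset.card_univ, Fintype.card_fin, nsmul_eq_mul]; ring
        _ ≤ Φ z := Finset.sum_le_sum h1
    obtain ⟨w, hw_anti, hw_tend, hw_mem⟩ := exists_seq_tendsto_sInf hne hbdd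
    choose xs hxsc hxsΦ using fun n => hw_mem n
    have hxs_anti : Antitone xs := by
      intro n k hnk
      rcases eq_or_ne (xs n) (xs k) with heq | hneq
      · exact heq.ge
    -- chain comparison
      rcases hchain (hxsc n) (hxsc k) hneq with hle | hle
      · refine (Phi_strict hle ?_).ge
        have h2 : Φ (xs k) ≤ Φ (xs n) := by rw [hxsΦ n, hxsΦ k]; exact hw_anti hnk
        exact h2
      · exact hle
    have hlim : ∀ i, ∃ vi, Tendsto (fun n => xs n i) atTop (𝓝 vi) := by
      intro i
      obtain ⟨w', hw'⟩ := mono_bdd_tendsto (u := fun n => -(xs n i)) (R := R)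
        (fun n k hnk => neg_le_neg ((hxs_anti hnk) i))
        (fun n => by rw [norm_neg]; exact (hcD (hxsc n)).1 i)
      exact ⟨-w', by simpa using hw'.neg⟩
    choose v hv using hlim
    have hxs_tend : Tendsto xs atTop (𝓝 v) := tendsto_pi_nhds.mpr hv
    have hle_xs : ∀ n, v ≤ xs n := by
      intro n i
      refine le_of_tendsto (hv i) ?_
      filter_upwards [eventually_ge_atTop n] with k hk using (hxs_anti hk) i
    have hvnorm : ∀ j, ‖v j‖ ≤ R := fun j =>
      le_of_tendsto ((hv j).norm) (Filter.Eventually.of_forall fun n => (hcD (hxsc n)).1 j)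
    have hKv : K v ≤ v := by
      intro i
      refine ge_of_tendsto (hv i) (Filter.Eventually.of_forall fun n => ?_)
      exact ((hKmono (hle_xs n)).trans (hcD (hxsc n)).2) i
    refine ⟨v, ⟨hvnorm, hKv⟩, fun z hz => ?_⟩
    by_cases hcase : ∃ n, xs n ≤ z
    · obtain ⟨n, hn⟩ := hcase
      exact (hle_xs n).trans hn
    · push_neg at hcase
      have hzn : ∀ n, z ≤ xs n := by
        intro n
        rcases eq_or_ne z (xs n) with heq | hneq
        · exact heq.le
        · rcases hchain hz (hxsc n) hneq with hle | hle
          · exact hle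
          · exact absurd hle (hcase n)
      have hzv : z ≤ v := by
        intro i
        refine ge_of_tendsto (hv i) (Filter.Eventually.of_forall fun n => (hzn n) i)
      have hΦv : Φ v ≤ sInf (Φ '' c) := by
        refine ge_of_tendsto hw_tend (Filter.Eventually.of_forall fun n => ?_)
        calc Φ v ≤ Φ (xs n) := hΦmono (hle_xs n)
          _ = w n := hxsΦ n
      have : z = v := Phi_strict hzv (hΦv.trans (csInf_le hbdd ⟨z, hz, rfl⟩))
      exact this.ge
  obtain ⟨u, huD, _hup, humin⟩ := zorn_min D hchain p ⟨hp1, hp2⟩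
  have hKuD : K u ∈ D := ⟨hKball u huD.1, hKmono huD.2⟩
  have hfix : K u = u := humin (K u) hKuD huD.2
  exact ⟨u, huD.1, hfix, fun y hy1 hy2 hyle => humin y ⟨hy1, hy2.le⟩ hyle⟩

lemma norm_inf_zero_le (z : Lp ℝ 1 μ) : ‖0 ⊓ z‖ ≤ ‖z‖ :=
  norm_le_norm_of_abs_le_abs <| abs_le'.mpr
    ⟨inf_le_right.trans (le_abs_self z),
     by rw [neg_inf, neg_zero]; exact sup_le (abs_nonneg z) (neg_le_abs z)⟩

lemma norm_sup_zero_le (z : Lp ℝ 1 μ) : ‖0 ⊔ z‖ ≤ ‖z‖ :=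
  norm_le_norm_of_abs_le_abs <| abs_le'.mpr
    ⟨sup_le (abs_nonneg z) (le_abs_self z),
     by rw [neg_sup, neg_zero]; exact inf_le_left.trans (abs_nonneg z)⟩

lemma zmax {m : ℕ} (K : (Fin m → Lp ℝ 1 μ) → Fin m → Lp ℝ 1 μ)
    (hKmono : Monotone K) (R : ℝ)
    (hKball : ∀ x, (∀ j, ‖x j‖ ≤ R) → ∀ j, ‖K x j‖ ≤ R)
    (p : Fin m → Lp ℝ 1 μ) (hp1 : ∀ j, ‖p j‖ ≤ R) (hp2 : p ≤ K p) :
    ∃ u, (∀ j, ‖u j‖ ≤ R) ∧ K u = u ∧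
      ∀ y, (∀ j, ‖y j‖ ≤ R) → K y = y → u ≤ y → y = u := by
  obtain ⟨u', h1, h2, h3⟩ := zmin (fun x => -(K (-x)))
    (fun x y hxy => neg_le_neg (hKmono (neg_le_neg hxy))) R
    (fun x hx j => by
      show ‖(-(K (-x))) j‖ ≤ R
      rw [Pi.neg_apply, norm_neg]
      exact hKball (-x) (fun j => by rw [Pi.neg_apply, norm_neg]; exact hx j) j)
    (-p) (fun j => by rw [Pi.neg_apply, norm_neg]; exact hp1 j)
    (by simp only [neg_neg]; exact neg_le_neg hp2)
  have h2' : K (-u') = -u' := by have h4 := congrArg Neg.neg h2; rwa [neg_neg] at h4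
  refine ⟨-u', fun j => by rw [Pi.neg_apply, norm_neg]; exact h1 j, h2', ?_⟩
  intro y hy1 hy2 hy3
  have := h3 (-y) (fun j => by rw [Pi.neg_apply, norm_neg]; exact hy1 j)
    (by rw [neg_neg, hy2]) (neg_le_neg hy3 |>.trans_eq (neg_neg u'))
  rw [← this, neg_neg]

end aux

end FixedPointAux

/-- Minimal and maximal fixed points in `B(R) ⊆ L¹([a,b])^m` for the system of increasing
primitive-integral operators `F_i(x)(t) = ∫_a^t f_i(x)`, assuming `F` maps `B(R)` into
itself. -/
theorem minimal_maximal_fixed_points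
    (a b : ℝ) (hab : a < b) (m : ℕ)
    (f F : Fin m → ((Fin m → Lp ℝ 1 (volume.restrict (Icc a b))) →
      Lp ℝ 1 (volume.restrict (Icc a b))))
    (hmono : ∀ i (x y : Fin m → Lp ℝ 1 (volume.restrict (Icc a b))),
      x ≤ y → f i x ≤ f i y)
    (hF : ∀ i x, (F i x : ℝ → ℝ) =ᵐ[volume.restrict (Icc a b)]
      fun t => ∫ s in Icc a t, (f i x : ℝ → ℝ) s ∂(volume.restrict (Icc a b)))
    (R : ℝ) (hR : 0 < R)
    (hbound : ∀ i x, (∀ j, ‖x j‖ ≤ R) → ‖F i x‖ ≤ R) :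
    (∃ xmin : Fin m → Lp ℝ 1 (volume.restrict (Icc a b)),
      (∀ j, ‖xmin j‖ ≤ R) ∧ (∀ i, F i xmin = xmin i) ∧
      ∀ y, (∀ j, ‖y j‖ ≤ R) → (∀ i, F i y = y i) → y ≤ xmin → y = xmin) ∧
    (∃ xmax : Fin m → Lp ℝ 1 (volume.restrict (Icc a b)),
      (∀ j, ‖xmax j‖ ≤ R) ∧ (∀ i, F i xmax = xmax i) ∧
      ∀ y, (∀ j, ‖y j‖ ≤ R) → (∀ i, F i y = y i) → xmax ≤ y → y = xmax) := by
  set G : (Fin m → Lp ℝ 1 (volume.restrict (Icc a b))) →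
      Fin m → Lp ℝ 1 (volume.restrict (Icc a b)) := fun x i => F i x with hG
  have hGmono : Monotone G := by
    intro x y hxy i
    refine (Lp.coeFn_le _ _).mp ?_
    have hfle : (f i x : ℝ → ℝ) ≤ᵐ[volume.restrict (Icc a b)] (f i y : ℝ → ℝ) :=
      (Lp.coeFn_le _ _).mpr (hmono i x y hxy)
    filter_upwards [hF i x, hF i y] with t h1 h2
    rw [h1, h2]
    exact integral_mono_ae ((L1.integrable_coeFn (f i x)).restrict)
      ((L1.integrable_coeFn (f i y)).restrict) (ae_restrict_of_ae hfle)
  have hGball : ∀ x, (∀ j, ‖x j‖ ≤ R) → ∀ j, ‖G x j‖ ≤ R := fun x hx j => hbound j x hx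
  have hzero : ∀ j : Fin m,
      ‖(0 : Fin m → Lp ℝ 1 (volume.restrict (Icc a b))) j‖ ≤ R := fun j => by
    simp only [Pi.zero_apply, norm_zero]; exact hR.le
  constructor
  · -- minimal fixed point
    obtain ⟨v, hv1, hv2, -⟩ := zmax (fun x i => 0 ⊔ G x i)
      (fun x y hxy i => sup_le_sup_left (hGmono hxy i) 0) R
      (fun x hx j => (norm_sup_zero_le _).trans (hGball x hx j))
      0 hzero (fun i => le_sup_left)
    have hvG : G v ≤ v := fun i =>
      calc G v i ≤ 0 ⊔ G v i := le_sup_right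
        _ = v i := congrFun hv2 i
    obtain ⟨u, hu1, hu2, hu3⟩ := zmin G hGmono R hGball v hv1 hvG
    exact ⟨u, hu1, fun i => congrFun hu2 i, fun y hy1 hy2 hy3 => hu3 y hy1 (funext hy2) hy3⟩
  · -- maximal fixed point
    obtain ⟨w, hw1, hw2, -⟩ := zmin (fun x i => 0 ⊓ G x i)
      (fun x y hxy i => inf_le_inf_left 0 (hGmono hxy i)) R
      (fun x hx j => (norm_inf_zero_le _).trans (hGball x hx j))
      0 hzero (fun i => inf_le_left)
    have hwG : w ≤ G w := fun i =>
      calc w i = 0 ⊓ G w i := (congrFun hw2 i).symm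
        _ ≤ G w i := inf_le_right
    obtain ⟨u, hu1, hu2, hu3⟩ := zmax G hGmono R hGball w hw1 hwG
    exact ⟨u, hu1, fun i => congrFun hu2 i, fun y hy1 hy2 hy3 => hu3 y hy1 (funext hy2) hy3⟩
end
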